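/- arXiv:0911.0113 — 6 statements merged into one kernel-verified Lean document; each statement's English description precedes it below -/
import Mathlib

section
/- Let r ≠ 0, let k be a real root of the quartic equation p³(1 - μ r^{-1/3} p) + 2rτ/σ² = 0, where τ = tan(φ). Then for any constants c₁, c₂, the function u(S,t) = (k³/r) S ln S - (k³ - τ) t S + c₁ S + c₂ e^{rt} solves the RAPM equation u_t + (σ²/2) S² u_SS (1 - μ (S u_SS)^{1/3}) - r u + r S u_S = 0 on S > 0. -/
/-- The real cube root. -/
noncomputable def cbrt (x : ℝ) : ℝ :=
  if 0 ≤ x then x ^ ((1:ℝ)/3) else -((-x) ^ ((1:ℝ)/3))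

/-- Partial derivative in S. -/
noncomputable def pS (u : ℝ → ℝ → ℝ) (S t : ℝ) : ℝ := deriv (fun s => u s t) S
/-- Second partial derivative in S. -/
noncomputable def pSS (u : ℝ → ℝ → ℝ) (S t : ℝ) : ℝ := deriv (fun s => pS u s t) S
/-- Partial derivative in t. -/
noncomputable def pT (u : ℝ → ℝ → ℝ) (S t : ℝ) : ℝ := deriv (fun τ => u S τ) t

/-- The RAPM equation u_t + (σ²/2) S² u_SS (1 - μ (S u_SS)^{1/3}) - r u + r S u_S = 0
holds at the point (S, t). -/
def RAPM (σ μ r : ℝ) (u : ℝ → ℝ → ℝ) (S t : ℝ) : Prop :=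
  pT u S t + σ^2/2 * S^2 * pSS u S t * (1 - μ * cbrt (S * pSS u S t))
    - r * u S t + r * S * pS u S t = 0

lemma cbrt_cube (k : ℝ) : cbrt (k^3) = k := by
  unfold cbrt
  rcases le_or_gt 0 k with h | h
  · rw [if_pos (by positivity)]
    rw [← Real.rpow_natCast k 3, ← Real.rpow_mul h]
    norm_num
  · rw [if_neg (not_le.mpr (Odd.pow_neg (by decide) h)),
      show -(k^3) = (-k)^3 by ring,
      ← Real.rpow_natCast (-k) 3, ← Real.rpow_mul (by linarith)]
    norm_num

lemma cbrt_mul (x y : ℝ) : cbrt (x * y) = cbrt x * cbrt y := by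
  unfold cbrt
  rcases le_or_gt 0 x with hx | hx <;> rcases le_or_gt 0 y with hy | hy
  · rw [if_pos hx, if_pos hy, if_pos (mul_nonneg hx hy), Real.mul_rpow hx hy]
  · rcases eq_or_lt_of_le hx with rfl | hx'
    · simp
    · rw [if_pos hx, if_neg hy.not_ge, if_neg (not_le.mpr (mul_neg_of_pos_of_neg hx' hy)),
        show -(x*y) = x * (-y) by ring, Real.mul_rpow hx (by linarith)]
      ring
  · rcases eq_or_lt_of_le hy with rfl | hy'
    · simp
    · rw [if_neg hx.not_ge, if_pos hy, if_neg (not_le.mpr (mul_neg_of_neg_of_pos hx hy')),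
        show -(x*y) = (-x) * y by ring, Real.mul_rpow (by linarith) hy]
      ring
  · rw [if_neg hx.not_ge, if_neg hy.not_ge, if_pos (le_of_lt (mul_pos_of_neg_of_neg hx hy)),
      show x*y = (-x) * (-y) by ring, Real.mul_rpow (by linarith) (by linarith)]
    ring

lemma cbrt_inv (x : ℝ) : cbrt x⁻¹ = (cbrt x)⁻¹ := by
  unfold cbrt
  rcases le_or_gt 0 x with hx | hx
  · rw [if_pos hx, if_pos (inv_nonneg.mpr hx), Real.inv_rpow hx]
  · rw [if_neg (not_le.mpr (inv_neg''.mpr hx)), if_neg hx.not_ge,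
      show -x⁻¹ = (-x)⁻¹ by ring, Real.inv_rpow (by linarith)]
    rw [neg_inv]


/-- Invariant solutions in case H₂, r ≠ 0: for each real root k of the quartic
p³(1 - μ r^{-1/3} p) + 2rτ/σ² = 0 with τ = tan φ, the function
u = (k³/r) S ln S - (k³ - τ) t S + c₁ S + c₂ e^{rt} solves the RAPM equation. -/
theorem rapm_H2_solutions (σ μ r φ k c₁ c₂ : ℝ) (hσ : 0 < σ) (hμ : 0 < μ)
    (hr : r ≠ 0) (hφ : φ ∈ Set.Ico 0 Real.pi) (hφ' : φ ≠ Real.pi / 2)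
    (hk : k^3 * (1 - μ * (cbrt r)⁻¹ * k) + 2 * r * Real.tan φ / σ^2 = 0) :
    ∀ S t : ℝ, 0 < S →
      RAPM σ μ r
        (fun S t => k^3 / r * S * Real.log S - (k^3 - Real.tan φ) * t * S
          + c₁ * S + c₂ * Real.exp (r * t)) S t := by
  intro S t hS
  have hS0 : S ≠ 0 := ne_of_gt hS
  set τ := Real.tan φ with hτ
  have hderiv1 : ∀ s : ℝ, s ≠ 0 → ∀ t : ℝ,
      deriv (fun s => k^3 / r * s * Real.log s - (k^3 - τ) * t * s
          + c₁ * s + c₂ * Real.exp (r * t)) s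
        = k^3/r * Real.log s + k^3/r - (k^3-τ)*t + c₁ := by
    intro s hs t
    have h1 : HasDerivAt (fun s : ℝ => k^3/r * s * Real.log s)
        (k^3/r * Real.log s + k^3/r) s := by
      have := ((hasDerivAt_id s).const_mul (k^3/r)).mul (Real.hasDerivAt_log hs)
      refine this.congr_deriv ?_
      simp only [id, mul_one]
      rw [mul_assoc (k^3/r) s, mul_inv_cancel₀ hs, mul_one]
    have h2 : HasDerivAt (fun s : ℝ => (k^3-τ)*t*s) ((k^3-τ)*t) s := by
      simpa using (hasDerivAt_id s).const_mul ((k^3-τ)*t)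
    have h3 : HasDerivAt (fun s : ℝ => c₁*s) c₁ s := by
      simpa using (hasDerivAt_id s).const_mul c₁
    have := (((h1.sub h2).add h3).add (hasDerivAt_const s (c₂ * Real.exp (r*t))))
    exact this.deriv.trans (by ring)
  have hpS : pS (fun S t => k^3 / r * S * Real.log S - (k^3 - τ) * t * S
          + c₁ * S + c₂ * Real.exp (r * t)) S t
      = k^3/r * Real.log S + k^3/r - (k^3-τ)*t + c₁ := hderiv1 S hS0 t
  have hpSS : pSS (fun S t => k^3 / r * S * Real.log S - (k^3 - τ) * t * S
          + c₁ * S + c₂ * Real.exp (r * t)) S t = k^3/r * S⁻¹ := by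
    unfold pSS
    have hev : (fun s => pS (fun S t => k^3 / r * S * Real.log S - (k^3 - τ) * t * S
          + c₁ * S + c₂ * Real.exp (r * t)) s t)
        =ᶠ[nhds S] (fun s => k^3/r * Real.log s + k^3/r - (k^3-τ)*t + c₁) := by
      filter_upwards [eventually_ne_nhds hS0] with s hs
      exact hderiv1 s hs t
    rw [hev.deriv_eq]
    have h1 : HasDerivAt (fun s : ℝ => k^3/r * Real.log s + k^3/r - (k^3-τ)*t + c₁)
        (k^3/r * S⁻¹) S := by
      have := (Real.hasDerivAt_log hS0).const_mul (k^3/r)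
      simpa using ((this.add_const (k^3/r)).sub_const ((k^3-τ)*t)).add_const c₁
    exact h1.deriv
  have hpT : pT (fun S t => k^3 / r * S * Real.log S - (k^3 - τ) * t * S
          + c₁ * S + c₂ * Real.exp (r * t)) S t
      = -((k^3-τ)*S) + c₂ * (Real.exp (r*t) * r) := by
    unfold pT
    have h2 : HasDerivAt (fun x : ℝ => (k^3-τ)*x*S) ((k^3-τ)*S) t := by
      have := (hasDerivAt_id t).const_mul ((k^3-τ))
      simpa using (this.mul_const S)
    have h4 : HasDerivAt (fun x : ℝ => c₂ * Real.exp (r*x)) (c₂ * (Real.exp (r*t) * r)) t := by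
      have := (((hasDerivAt_id t).const_mul r).exp).const_mul c₂
      simpa [mul_comm] using this
    have := (((hasDerivAt_const t (k^3/r*S*Real.log S)).sub h2).add
      (hasDerivAt_const t (c₁*S))).add h4
    exact this.deriv.trans (by ring)
  unfold RAPM
  rw [hpS, hpSS, hpT]
  have hc : S * (k^3/r * S⁻¹) = k^3 * r⁻¹ := by field_simp
  rw [hc, cbrt_mul, cbrt_cube, cbrt_inv]
  have hσ0 : σ ≠ 0 := ne_of_gt hσ
  have hcb : cbrt r ≠ 0 := by
    unfold cbrt
    rcases le_or_gt 0 r with h | h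
    · rw [if_pos h]
      have : 0 < r := lt_of_le_of_ne h (Ne.symm hr)
      positivity
    · rw [if_neg h.not_ge]
      have : (0:ℝ) < (-r) ^ ((1:ℝ)/3) := Real.rpow_pos_of_pos (by linarith) _
      intro hcon; rw [neg_eq_zero] at hcon; linarith
  field_simp
  field_simp at hk
  linear_combination S * hk
end

section
/- Let r = 0 and let k be a real root of p³(1 - μp) + 2τ/σ² = 0 with τ = tan φ. Then u(S,t) = k³ S (ln S - 1) + τ t S + c₁ S + c₂ solves the RAPM equation with r = 0, i.e. u_t + (σ²/2) S² u_SS (1 - μ (S u_SS)^{1/3}) = 0, on S > 0. -/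
lemma cbrt_cube_nonneg (k : ℝ) (hk : 0 ≤ k) : cbrt (k^3) = k := by
  have h3 : (0:ℝ) ≤ k^3 := by positivity
  rw [cbrt, if_pos h3]
  rw [show (k:ℝ)^3 = k ^ ((3:ℕ):ℝ) from (Real.rpow_natCast k 3).symm,
    ← Real.rpow_mul hk]
  norm_num

/-- Invariant solutions in case H₂⁰, r = 0: for each real root k of
p³(1 - μ p) + 2τ/σ² = 0 with τ = tan φ, the function
u = k³ S (ln S - 1) + τ t S + c₁ S + c₂ solves the RAPM equation with r = 0. -/
theorem rapm_H20_solutions (σ μ φ k c₁ c₂ : ℝ) (hσ : 0 < σ) (hμ : 0 < μ)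
    (hφ : φ ∈ Set.Ico 0 Real.pi) (hφ' : φ ≠ Real.pi / 2)
    (hk : k^3 * (1 - μ * k) + 2 * Real.tan φ / σ^2 = 0) :
    ∀ S t : ℝ, 0 < S →
      RAPM σ μ 0
        (fun S t => k^3 * S * (Real.log S - 1) + Real.tan φ * t * S
          + c₁ * S + c₂) S t := by
  intro S t hS
  set τ := Real.tan φ with hτ
  set u : ℝ → ℝ → ℝ := fun S t => k^3 * S * (Real.log S - 1) + τ * t * S + c₁ * S + c₂
    with hu
  have hdS : ∀ s : ℝ, 0 < s → ∀ t : ℝ,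
      HasDerivAt (fun s => u s t) (k^3 * Real.log s + τ * t + c₁) s := by
    intro s hs t
    have h1 : HasDerivAt (fun s : ℝ => k^3 * s * (Real.log s - 1))
        (k^3 * Real.log s) s := by
      have h := (((Real.hasDerivAt_log hs.ne').sub_const 1).const_mul (k^3)).mul
        (hasDerivAt_id s)
      refine HasDerivAt.congr_deriv (HasDerivAt.congr_of_eventuallyEq h (Filter.Eventually.of_forall fun y => ?_)) ?_
      · simp only [Pi.mul_apply, id]; ring
      · rw [id_eq, mul_assoc, inv_mul_cancel₀ hs.ne']; ring
    have h2 : HasDerivAt (fun s : ℝ => τ * t * s) (τ * t) s := by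
      simpa using (hasDerivAt_id s).const_mul (τ * t)
    have h3 : HasDerivAt (fun s : ℝ => c₁ * s) c₁ s := by
      simpa using (hasDerivAt_id s).const_mul c₁
    exact ((h1.add h2).add h3).add_const c₂
  have hpS : ∀ s : ℝ, 0 < s → pS u s t = k^3 * Real.log s + τ * t + c₁ := by
    intro s hs
    exact (hdS s hs t).deriv
  have hpSS : pSS u S t = k^3 / S := by
    have heq : (fun s => pS u s t) =ᶠ[nhds S]
        (fun s => k^3 * Real.log s + τ * t + c₁) := by
      filter_upwards [eventually_gt_nhds hS] with s hs using hpS s hs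
    rw [pSS, heq.deriv_eq]
    have h : HasDerivAt (fun s => k^3 * Real.log s + τ * t + c₁) (k^3 / S) S := by
      have h := (((Real.hasDerivAt_log hS.ne').const_mul (k^3)).add_const
        (τ * t)).add_const c₁
      rw [div_eq_mul_inv]; exact h
    exact h.deriv
  have hpT : pT u S t = τ * S := by
    have h : HasDerivAt (fun t : ℝ => u S t) (τ * S) t := by
      have h := (((((hasDerivAt_id t).const_mul τ).mul_const S).const_add
        (k^3 * S * (Real.log S - 1))).add_const (c₁ * S)).add_const c₂
      exact h.congr_deriv (by ring)
    exact h.deriv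
  have hSpSS : S * pSS u S t = k^3 := by
    rw [hpSS]; field_simp
  unfold RAPM
  rw [hpT, hSpSS, hpSS, cbrt_cube]
  have hk' : k^3 * (1 - μ * k) * σ^2 = -(2*τ) := by
    have hσ2 : σ^2 ≠ 0 := by positivity
    field_simp at hk
    linarith
  have key : σ^2/2 * S^2 * (k^3/S) * (1 - μ * k) = -(τ * S) := by
    rw [show σ^2/2 * S^2 * (k^3/S) * (1 - μ * k)
        = (S/2) * (k^3 * (1 - μ * k) * σ^2) by field_simp, hk']
    ring
  rw [key]
  ring
end

section
/- For r = 0: if w : (0,∞) → ℝ is C² and u(S,t) := w(S) + τ t S with τ = tan φ, then u solves the RAPM equation with r = 0 if and only if w satisfies (σ²/2) z w_zz (1 - μ (z w_zz)^{1/3}) + τ = 0 at z = S (after dividing out S > 0). -/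
/-- Reduction of the RAPM model with r = 0 by the subgroup H₂⁰: with
u = w(S) + τ t S, τ = tan φ, the PDE holds iff
(σ²/2) z w'' (1 - μ (z w'')^{1/3}) + τ = 0 at z = S. -/
theorem rapm_H20_reduction (σ μ φ : ℝ) (hσ : 0 < σ) (hμ : 0 < μ)
    (hφ : φ ∈ Set.Ico 0 Real.pi) (hφ' : φ ≠ Real.pi / 2)
    (w : ℝ → ℝ) (hw : ContDiffOn ℝ 2 w (Set.Ioi 0)) :
    ∀ S t : ℝ, 0 < S →
      (RAPM σ μ 0 (fun S t => w S + Real.tan φ * t * S) S t ↔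
        σ^2/2 * S * deriv (deriv w) S * (1 - μ * cbrt (S * deriv (deriv w) S))
          + Real.tan φ = 0) := by
  intro S t hS
  set u : ℝ → ℝ → ℝ := fun S t => w S + Real.tan φ * t * S with hu
  have hopen : IsOpen (Set.Ioi (0:ℝ)) := isOpen_Ioi
  -- pT
  have hpT : pT u S t = Real.tan φ * S := by
    have h1 : (fun τ => u S τ) = fun τ => (Real.tan φ * S) * τ + w S := by
      funext τ; simp [hu]; ring
    have h2 : HasDerivAt (fun τ : ℝ => (Real.tan φ * S) * τ + w S)
        (Real.tan φ * S) t := by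
      simpa using ((hasDerivAt_id t).const_mul (Real.tan φ * S)).add_const (w S)
    rw [pT, h1, h2.deriv]
  -- pS on a neighborhood
  have hpS : ∀ s ∈ Set.Ioi (0:ℝ), pS u s t = deriv w s + Real.tan φ * t := by
    intro s hs
    have hws : DifferentiableAt ℝ w s :=
      (hw.contDiffAt (hopen.mem_nhds hs)).differentiableAt (by norm_num)
    have h2 : HasDerivAt (fun s' : ℝ => w s' + (Real.tan φ * t) * s')
        (deriv w s + Real.tan φ * t) s := by
      simpa using hws.hasDerivAt.fun_add ((hasDerivAt_id s).const_mul (Real.tan φ * t))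
    have h3 : (fun s' => u s' t) = fun s' : ℝ => w s' + (Real.tan φ * t) * s' := by
      funext s'; simp only [hu]
    rw [pS, h3, h2.deriv]
  -- pSS
  have hpSS : pSS u S t = deriv (deriv w) S := by
    have hev : (fun s => pS u s t) =ᶠ[nhds S] fun s => deriv w s + Real.tan φ * t := by
      filter_upwards [hopen.mem_nhds hS] with s hs using hpS s hs
    rw [pSS, hev.deriv_eq, deriv_add_const]
  have hS' : S ≠ 0 := ne_of_gt hS
  rw [RAPM, hpT, hpSS]
  set W := deriv (deriv w) S
  set K := cbrt (S * W)
  constructor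
  · intro h
    have key : S * (σ^2/2 * S * W * (1 - μ * K) + Real.tan φ) = 0 := by
      linear_combination h
    rcases mul_eq_zero.mp key with h' | h'
    · exact absurd h' hS'
    · exact h'
  · intro h
    linear_combination S * h
end

section
/- For r ≠ 1: if w : (0,∞) → ℝ is C² and u(S,t) := e^{(r-1)t}(w(S e^{-(r-1)t}) + α e^t·e^{-(r-1)t}·e^{(r-1)t}) — equivalently u(S,t) = e^{(r-1)t} w(z) + α e^{rt} with z = S e^{-(r-1)t} — then u solves the RAPM equation if and only if w satisfies -w + z w_z + (σ²/2) z² w_zz (1 - μ (z w_zz)^{1/3}) = 0 at z = S e^{-(r-1)t}. -/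
/-- Reduction of the RAPM model by the subalgebra ⟨e₁ + α e₂⟩ (r ≠ 1): with
u = e^{(r-1)t} w(z) + α e^{rt}, z = S e^{-(r-1)t}, the PDE holds iff
-w + z w' + (σ²/2) z² w'' (1 - μ (z w'')^{1/3}) = 0. -/
theorem rapm_special_reduction (σ μ r α : ℝ) (hσ : 0 < σ) (hμ : 0 < μ)
    (hr : r ≠ 1) (w : ℝ → ℝ) (hw : ContDiffOn ℝ 2 w (Set.Ioi 0)) :
    ∀ S t : ℝ, 0 < S →
      (RAPM σ μ r
          (fun S t => Real.exp ((r - 1) * t) * w (S * Real.exp (-(r - 1) * t))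
            + α * Real.exp (r * t)) S t ↔
        (- w (S * Real.exp (-(r - 1) * t))
          + (S * Real.exp (-(r - 1) * t)) * deriv w (S * Real.exp (-(r - 1) * t))
          + σ^2/2 * (S * Real.exp (-(r - 1) * t))^2 *
              deriv (deriv w) (S * Real.exp (-(r - 1) * t)) *
            (1 - μ * cbrt ((S * Real.exp (-(r - 1) * t)) *
              deriv (deriv w) (S * Real.exp (-(r - 1) * t)))) = 0)) := by
  intro S t hS
  set P : ℝ := Real.exp ((r - 1) * t) with hP
  set Q : ℝ := Real.exp (-(r - 1) * t) with hQ
  have hQpos : 0 < Q := Real.exp_pos _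
  have hPpos : 0 < P := Real.exp_pos _
  have hPQ : P * Q = 1 := by
    rw [hP, hQ, ← Real.exp_add]
    ring_nf
    exact Real.exp_zero
  set z : ℝ := S * Q with hzdef
  have hz : 0 < z := mul_pos hS hQpos
  -- differentiability facts
  have hw1' : DifferentiableOn ℝ w (Set.Ioi 0) := hw.differentiableOn (by norm_num)
  have hwd : ContDiffOn ℝ 1 (deriv w) (Set.Ioi 0) :=
    hw.deriv_of_isOpen isOpen_Ioi (by norm_num)
  have hw2' : DifferentiableOn ℝ (deriv w) (Set.Ioi 0) := hwd.differentiableOn one_ne_zero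
  have hw1 : DifferentiableAt ℝ w z := hw1'.differentiableAt (isOpen_Ioi.mem_nhds hz)
  have hw2 : DifferentiableAt ℝ (deriv w) z := hw2'.differentiableAt (isOpen_Ioi.mem_nhds hz)
  set A := w z with hA
  set B := deriv w z with hB
  set C := deriv (deriv w) z with hC
  -- derivative in S at any point s > 0
  have hDS : ∀ s : ℝ, 0 < s →
      HasDerivAt (fun s' => P * w (s' * Q) + α * Real.exp (r * t))
        (P * (deriv w (s * Q) * Q)) s := by
    intro s hs
    have h1 : DifferentiableAt ℝ w (s * Q) :=
      hw1'.differentiableAt (isOpen_Ioi.mem_nhds (mul_pos hs hQpos))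
    have h2 : HasDerivAt (fun s' : ℝ => s' * Q) Q s := hasDerivAt_mul_const Q
    exact ((h1.hasDerivAt.comp s h2).const_mul P).add_const _
  -- pS value
  have hpS : pS (fun S t => Real.exp ((r - 1) * t) * w (S * Real.exp (-(r - 1) * t))
      + α * Real.exp (r * t)) S t = P * (B * Q) := by
    simp only [pS, ← hP, ← hQ]
    exact (hDS S hS).deriv
  -- pS eventually
  have hpSev : (fun s => pS (fun S t => Real.exp ((r - 1) * t) * w (S * Real.exp (-(r - 1) * t))
      + α * Real.exp (r * t)) s t) =ᶠ[nhds S] (fun s => P * (deriv w (s * Q) * Q)) := by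
    filter_upwards [eventually_gt_nhds hS] with s hs
    simp only [pS, ← hP, ← hQ]
    exact (hDS s hs).deriv
  -- pSS value
  have hpSS : pSS (fun S t => Real.exp ((r - 1) * t) * w (S * Real.exp (-(r - 1) * t))
      + α * Real.exp (r * t)) S t = P * (C * Q * Q) := by
    have h2 : HasDerivAt (fun s' : ℝ => s' * Q) Q S := hasDerivAt_mul_const Q
    have hg : HasDerivAt (fun s => P * (deriv w (s * Q) * Q)) (P * (C * Q * Q)) S := by
      have := ((hw2.hasDerivAt.comp S h2).mul_const Q).const_mul P
      simpa only [Function.comp_def] using this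
    rw [pSS, hpSev.deriv_eq, hg.deriv]
  -- pT value
  have hpT : pT (fun S t => Real.exp ((r - 1) * t) * w (S * Real.exp (-(r - 1) * t))
      + α * Real.exp (r * t)) S t
      = (r - 1) * P * A + P * (B * (S * (Q * (-(r - 1))))) + α * (Real.exp (r * t) * r) := by
    have h1 : HasDerivAt (fun τ => Real.exp ((r - 1) * τ)) (Real.exp ((r - 1) * t) * (r - 1)) t := by
      simpa only [id_eq, mul_one] using ((hasDerivAt_id t).const_mul (r - 1)).exp
    have h2i : HasDerivAt (fun τ => S * Real.exp (-(r - 1) * τ))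
        (S * (Real.exp (-(r - 1) * t) * (-(r - 1)))) t := by
      simpa only [id_eq, mul_one] using (((hasDerivAt_id t).const_mul (-(r - 1))).exp).const_mul S
    have h2 : HasDerivAt (fun τ => w (S * Real.exp (-(r - 1) * τ)))
        (B * (S * (Q * (-(r - 1))))) t := by
      have := hw1.hasDerivAt.comp t h2i
      simpa only [Function.comp_def] using this
    have h3 : HasDerivAt (fun τ => α * Real.exp (r * τ)) (α * (Real.exp (r * t) * r)) t := by
      simpa only [id_eq, mul_one] using (((hasDerivAt_id t).const_mul r).exp).const_mul α
    have htot := (h1.mul h2).add h3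
    rw [pT]
    have : deriv (fun τ => Real.exp ((r - 1) * τ) * w (S * Real.exp (-(r - 1) * τ)) + α * Real.exp (r * τ)) t = _ := htot.deriv
    simp only [← hP, ← hQ] at this ⊢
    rw [this]; ring
  -- cbrt argument equality
  have hcb : S * (P * (C * Q * Q)) = z * C := by
    rw [hzdef]; linear_combination (S * Q * C) * hPQ
  rw [RAPM, hpS, hpSS, hpT, hcb]
  simp only [← hP, ← hQ, ← hzdef, ← hA, ← hB, ← hC]
  have hkey : (r - 1) * P * A + P * (B * (S * (Q * (-(r - 1))))) + α * (Real.exp (r * t) * r)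
      + σ ^ 2 / 2 * S ^ 2 * (P * (C * Q * Q)) * (1 - μ * cbrt (z * C))
      - r * (P * A + α * Real.exp (r * t)) + r * S * (P * (B * Q))
      = P * (-A + z * B + σ ^ 2 / 2 * z ^ 2 * C * (1 - μ * cbrt (z * C))) := by
    rw [hzdef]; ring
  rw [hkey, mul_eq_zero, or_iff_right hPpos.ne']
end

section
/- For r = 0: if a, φ satisfy a ≠ 0, φ ≠ π/2, and w : (0,∞) → ℝ is C², set δ = (a cos φ)^{-1}, ζ = a sin φ, z = S e^{δt}, and u(S,t) = S w(z) + ζ S ln S. Then u solves the RAPM equation with r = 0 if and only if w satisfies (σ²/2)(z(zw)_zz + ζ)(1 - μ(z(zw)_zz + ζ)^{1/3}) + δ z w_z = 0, where (zw)_zz = z w_zz + 2 w_z. -/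
/-- Reduction of the RAPM model with r = 0 by the subgroup H₃⁰: with
u = S w(z) + ζ S ln S, z = S e^{δt}, δ = (a cos φ)⁻¹, ζ = a sin φ, the PDE holds
iff (σ²/2)(z(z w'' + 2w') + ζ)(1 - μ(z(z w'' + 2w') + ζ)^{1/3}) + δ z w' = 0. -/
theorem rapm_H30_reduction (σ μ a φ : ℝ) (hσ : 0 < σ) (hμ : 0 < μ) (ha : a ≠ 0)
    (hφ : φ ∈ Set.Ico 0 Real.pi) (hφ' : φ ≠ Real.pi / 2)
    (w : ℝ → ℝ) (hw : ContDiffOn ℝ 2 w (Set.Ioi 0)) :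
    ∀ S t : ℝ, 0 < S →
      (RAPM σ μ 0
          (fun S t => S * w (S * Real.exp ((a * Real.cos φ)⁻¹ * t))
            + a * Real.sin φ * S * Real.log S) S t ↔
        σ^2/2 *
            ((S * Real.exp ((a * Real.cos φ)⁻¹ * t)) *
                ((S * Real.exp ((a * Real.cos φ)⁻¹ * t)) *
                    deriv (deriv w) (S * Real.exp ((a * Real.cos φ)⁻¹ * t))
                  + 2 * deriv w (S * Real.exp ((a * Real.cos φ)⁻¹ * t)))
              + a * Real.sin φ) *
            (1 - μ * cbrt
              ((S * Real.exp ((a * Real.cos φ)⁻¹ * t)) *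
                  ((S * Real.exp ((a * Real.cos φ)⁻¹ * t)) *
                      deriv (deriv w) (S * Real.exp ((a * Real.cos φ)⁻¹ * t))
                    + 2 * deriv w (S * Real.exp ((a * Real.cos φ)⁻¹ * t)))
                + a * Real.sin φ))
          + (a * Real.cos φ)⁻¹ * (S * Real.exp ((a * Real.cos φ)⁻¹ * t)) *
              deriv w (S * Real.exp ((a * Real.cos φ)⁻¹ * t)) = 0) := by
  intro S t hS
  set δ : ℝ := (a * Real.cos φ)⁻¹ with hδ
  set ζ : ℝ := a * Real.sin φ with hζ
  set e : ℝ := Real.exp (δ * t) with he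
  have he0 : 0 < e := Real.exp_pos _
  set z : ℝ := S * e with hzdef
  have hz : 0 < z := mul_pos hS he0
  -- derivatives of w
  have hw1 : ∀ x ∈ Set.Ioi (0:ℝ), HasDerivAt w (deriv w x) x := fun x hx =>
    ((hw.contDiffAt (isOpen_Ioi.mem_nhds hx)).differentiableAt (by norm_num)).hasDerivAt
  have hw2 : HasDerivAt (deriv w) (deriv (deriv w) z) z :=
    (((hw.deriv_of_isOpen (m := 1) isOpen_Ioi (by norm_num)).contDiffAt
      (isOpen_Ioi.mem_nhds hz)).differentiableAt one_ne_zero).hasDerivAt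
  set u : ℝ → ℝ → ℝ := fun S t => S * w (S * Real.exp (δ * t)) + ζ * S * Real.log S with hu
  -- first S-derivative
  have hDS : ∀ s ∈ Set.Ioi (0:ℝ), HasDerivAt (fun s' => u s' t)
      (w (s * e) + s * e * deriv w (s * e) + (ζ * Real.log s + ζ)) s := by
    intro s hs
    have hse : (0:ℝ) < s * e := mul_pos hs he0
    have hinner : HasDerivAt (fun s' : ℝ => s' * e) e s := hasDerivAt_mul_const e
    have h1 : HasDerivAt (fun s' => w (s' * e)) (deriv w (s * e) * e) s :=
      (hw1 _ hse).comp s hinner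
    have h2 : HasDerivAt (fun s' => s' * w (s' * e))
        (1 * w (s * e) + s * (deriv w (s * e) * e)) s :=
      (hasDerivAt_id s).mul h1
    have h3 : HasDerivAt (fun s' => ζ * s' * Real.log s')
        ((ζ * 1) * Real.log s + ζ * s * s⁻¹) s :=
      ((hasDerivAt_id s).const_mul ζ).mul (Real.hasDerivAt_log hs.ne')
    have hs0 : (0:ℝ) < s := hs
    have hc : ζ * s * s⁻¹ = ζ := by rw [mul_assoc, mul_inv_cancel₀ hs0.ne', mul_one]
    have := h2.add h3
    rw [hc] at this
    exact this.congr_deriv (by ring)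
  have hpS : ∀ s ∈ Set.Ioi (0:ℝ), pS u s t
      = w (s * e) + s * e * deriv w (s * e) + (ζ * Real.log s + ζ) := fun s hs =>
    (hDS s hs).deriv
  -- second S-derivative
  have hpSS : pSS u S t = e * deriv w z + (e * deriv w z + S * e * (deriv (deriv w) z * e))
      + ζ * S⁻¹ := by
    have hev : (fun s => pS u s t) =ᶠ[nhds S]
        (fun s => w (s * e) + s * e * deriv w (s * e) + (ζ * Real.log s + ζ)) :=
      Filter.eventuallyEq_of_mem (isOpen_Ioi.mem_nhds hS) hpS
    rw [pSS, hev.deriv_eq]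
    have hinner : HasDerivAt (fun s' : ℝ => s' * e) e S := hasDerivAt_mul_const e
    have h1 : HasDerivAt (fun s' => w (s' * e)) (deriv w z * e) S := (hw1 _ hz).comp S hinner
    have h2 : HasDerivAt (fun s' => deriv w (s' * e)) (deriv (deriv w) z * e) S :=
      HasDerivAt.comp (h := fun s' : ℝ => s' * e) S hw2 hinner
    have h3 : HasDerivAt (fun s' => s' * e * deriv w (s' * e))
        (e * deriv w z + S * e * (deriv (deriv w) z * e)) S := by
      have := ((hasDerivAt_mul_const e).mul h2)
      exact this
    have h4 : HasDerivAt (fun s' : ℝ => ζ * Real.log s' + ζ) (ζ * S⁻¹) S :=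
      (((Real.hasDerivAt_log hS.ne').const_mul ζ)).add_const ζ
    have := ((h1.add h3).add h4).deriv
    rw [show deriv (fun s => w (s * e) + s * e * deriv w (s * e) + (ζ * Real.log s + ζ)) S = _ from this]
    ring
  -- t-derivative
  have hpT : pT u S t = S * (deriv w z * (S * (e * δ))) := by
    have hinner : HasDerivAt (fun τ => S * Real.exp (δ * τ)) (S * (e * δ)) t := by
      have h0 : HasDerivAt (fun τ : ℝ => δ * τ) δ t := by
        simpa using (hasDerivAt_id t).const_mul δ
      exact ((Real.hasDerivAt_exp (δ * t)).comp t h0).const_mul S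
    have h1 : HasDerivAt (fun τ => S * w (S * Real.exp (δ * τ)) + ζ * S * Real.log S)
        (S * (deriv w z * (S * (e * δ)))) t := by
      have := (((hw1 _ hz).comp t hinner).const_mul S).add_const (ζ * S * Real.log S)
      exact this
    rw [pT]
    exact h1.deriv
  -- now the main computation
  set W1 := deriv w z
  set W2 := deriv (deriv w) z
  have hSP : S * pSS u S t = z * (z * W2 + 2 * W1) + ζ := by
    rw [hpSS, hzdef]
    field_simp
    ring
  have key : σ^2/2 * S^2 * pSS u S t = σ^2/2 * S * (z * (z * W2 + 2 * W1) + ζ) := by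
    rw [← hSP]; ring
  rw [RAPM, hSP, key, hpT]
  set A := z * (z * W2 + 2 * W1) + ζ with hA
  have hfac : S * (W1 * (S * (e * δ))) + σ^2/2 * S * A * (1 - μ * cbrt A)
      - 0 * u S t + 0 * S * pS u S t
      = S * (σ^2/2 * A * (1 - μ * cbrt A) + δ * z * W1) := by
    rw [hzdef]; ring
  rw [hfac, mul_eq_zero]
  simp [hS.ne']
end

section
/- For r = 0 and S u_SS expressed in the invariant variables of case H₄⁰: if w : (0,∞) → ℝ is C², τ = tan φ, ε = ±1, and u(S,t) = w(S) + τ t S + (ε/cos φ) t, then u solves the RAPM equation with r = 0 if and only if (σ²/2) z² w_zz (1 - μ(z w_zz)^{1/3}) + τ z + ε/cos φ = 0 at z = S. -/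
/-- Reduction of the RAPM model with r = 0 by the subgroup H₄⁰: with
u = w(S) + τ t S + (ε/cos φ) t, τ = tan φ, ε = ±1, the PDE holds iff
(σ²/2) z² w'' (1 - μ(z w'')^{1/3}) + τ z + ε/cos φ = 0 at z = S. -/
theorem rapm_H40_reduction (σ μ φ ε : ℝ) (hσ : 0 < σ) (hμ : 0 < μ)
    (hφ : φ ∈ Set.Ico 0 Real.pi) (hφ' : φ ≠ Real.pi / 2)
    (hε : ε = 1 ∨ ε = -1)
    (w : ℝ → ℝ) (hw : ContDiffOn ℝ 2 w (Set.Ioi 0)) :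
    ∀ S t : ℝ, 0 < S →
      (RAPM σ μ 0
          (fun S t => w S + Real.tan φ * t * S + ε / Real.cos φ * t) S t ↔
        σ^2/2 * S^2 * deriv (deriv w) S *
            (1 - μ * cbrt (S * deriv (deriv w) S))
          + Real.tan φ * S + ε / Real.cos φ = 0) := by
  intro S t hS
  set u : ℝ → ℝ → ℝ := fun S t => w S + Real.tan φ * t * S + ε / Real.cos φ * t with hu
  have hdiff : ∀ s ∈ Set.Ioi (0:ℝ), DifferentiableAt ℝ w s := fun s hs =>
    (hw.contDiffAt (isOpen_Ioi.mem_nhds hs)).differentiableAt two_ne_zero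
  have hpS : ∀ s ∈ Set.Ioi (0:ℝ), pS u s t = deriv w s + Real.tan φ * t := by
    intro s hs
    have h1 : HasDerivAt (fun s' => u s' t) (deriv w s + Real.tan φ * t) s := by
      have := ((hdiff s hs).hasDerivAt.add
        (((hasDerivAt_id s).const_mul (Real.tan φ * t)))).add_const (ε / Real.cos φ * t)
      simpa [hu, mul_one, mul_comm, mul_assoc, mul_left_comm] using this
    simpa [pS] using h1.deriv
  have hpSS : pSS u S t = deriv (deriv w) S := by
    have hev : (fun s => pS u s t) =ᶠ[nhds S] (fun s => deriv w s + Real.tan φ * t) := by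
      filter_upwards [isOpen_Ioi.mem_nhds hS] with s hs using hpS s hs
    rw [pSS, hev.deriv_eq, deriv_add_const]
  have hpT : pT u S t = Real.tan φ * S + ε / Real.cos φ := by
    have h2 : (fun τ => u S τ) = fun τ => (Real.tan φ * S + ε / Real.cos φ) * τ + w S := by
      funext τ; simp [hu]; ring
    rw [pT, h2, deriv_add_const, deriv_const_mul_field, deriv_id'']
    ring
  unfold RAPM
  rw [hpSS, hpT]
  constructor <;> intro h <;> linarith
end
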